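/- Let ε_1, ..., ε_N be i.i.d. real random variables with distribution function F. Let F̂_{a,b}(x) = (b−a)^{-1} Σ_{t=a+1}^{b} 1{ε_t ≤ x} for integers 0 ≤ a < b ≤ N. If (a_n, b_n) and (â_n, b̂_n) are (possibly random) index pairs with |â_n − a_n| + |b̂_n − b_n| = o_P(b_n − a_n) and b_n − a_n → ∞, then sup_x | F̂_{â_n, b̂_n}(x) − F̂_{a_n, b_n}(x) | = o_P(1); consequently sup_x | F̂_{â_n, b̂_n}(x) − F(x) | = o_P(1). -/

import Mathlib

/-!
Moving the endpoints of a segment by `Δ = |â - a| + |b̂ - b|` changes the segment sum of a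
`[0, 1]`-valued sequence by at most `Δ` and its length by at most `Δ`, so the two segment means
differ by at most `2Δ / (b̂ - â)`; when `Δ = o_P(b - a)` this is `o_P(1)`, uniformly in `x`.

For the second claim it then suffices to prove the Glivenko–Cantelli theorem in probability along
the deterministic segments. By Chebyshev's inequality the empirical measure of the segment
`(a, b]` is within `η` of the law `ν` of `ε 0` on any fixed set, outside an event of probability
at most `1 / (4 (b - a) η²)`. A finite grid of quantiles `q j` of `ν` at the levels `j / k`
reduces the uniform bound to the sets `Iic (q j)` and `Iio (q j)`: both distribution functions
are monotone, so between consecutive grid points they can drift apart by at most `1 / k`.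
-/

open MeasureTheory ProbabilityTheory Finset Filter

open scoped ENNReal Topology

noncomputable def segmentMean (f : ℕ → ℝ) (s e : ℕ) : ℝ :=
  ((e : ℝ) - s)⁻¹ * ∑ t ∈ Icc (s + 1) e, f t

section SegmentMean

variable {f : ℕ → ℝ}

lemma abs_sum_range_sub_sum_range_le (hf : ∀ t, f t ∈ Set.Icc 0 1) (m m' : ℕ) :
    |∑ t ∈ range m', f t - ∑ t ∈ range m, f t| ≤ |(m' : ℝ) - m| := by
  wlog h : m ≤ m' generalizing m m'
  · rw [abs_sub_comm, abs_sub_comm (m' : ℝ)]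
    exact this m' m (by omega)
  rw [← sum_Ico_eq_sub _ h, abs_of_nonneg (sum_nonneg fun t _ => (hf t).1),
    abs_of_nonneg (by simpa using h)]
  simpa [Nat.cast_sub h] using sum_le_card_nsmul (Ico m m') f 1 fun t _ => (hf t).2

lemma sum_Icc_add_one_eq_sum_range_sub (f : ℕ → ℝ) {s e : ℕ} (h : s ≤ e) :
    ∑ t ∈ Icc (s + 1) e, f t = ∑ t ∈ range (e + 1), f t - ∑ t ∈ range (s + 1), f t := by
  rw [← Ico_add_one_right_eq_Icc, sum_Ico_eq_sub _ (by omega)]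

lemma segmentMean_mem_Icc (hf : ∀ t, f t ∈ Set.Icc 0 1) {s e : ℕ} (h : s < e) :
    segmentMean f s e ∈ Set.Icc 0 1 := by
  have hm : (0 : ℝ) < e - s := sub_pos.2 (by exact_mod_cast h)
  have hsum : ∑ t ∈ Icc (s + 1) e, f t ≤ (e : ℝ) - s := by
    simpa [Nat.cast_sub h.le] using sum_le_card_nsmul (Icc (s + 1) e) f 1 fun t _ => (hf t).2
  refine ⟨mul_nonneg (inv_nonneg.2 hm.le) (sum_nonneg fun t _ => (hf t).1), ?_⟩
  rw [segmentMean, inv_mul_le_iff₀ hm, mul_one]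
  exact hsum

lemma abs_segmentMean_sub_le (hf : ∀ t, f t ∈ Set.Icc 0 1) {s e s' e' : ℕ} (h : s < e)
    (h' : s' < e') :
    |segmentMean f s' e' - segmentMean f s e| ≤
      2 * (|(s' : ℝ) - s| + |(e' : ℝ) - e|) / ((e' : ℝ) - s') := by
  have hm' : (0 : ℝ) < e' - s' := sub_pos.2 (by exact_mod_cast h')
  have hswap : ∀ a b c d : ℝ, a - b - (c - d) = (a - c) - (b - d) := fun _ _ _ _ => by ring
  have hsum : |∑ t ∈ Icc (s' + 1) e', f t - ∑ t ∈ Icc (s + 1) e, f t| ≤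
      |(s' : ℝ) - s| + |(e' : ℝ) - e| := by
    rw [sum_Icc_add_one_eq_sum_range_sub f h.le, sum_Icc_add_one_eq_sum_range_sub f h'.le, hswap,
      add_comm |(s' : ℝ) - s|]
    refine (abs_sub _ _).trans (add_le_add ?_ ?_)
    · simpa using abs_sum_range_sub_sum_range_le hf (e + 1) (e' + 1)
    · simpa using abs_sum_range_sub_sum_range_le hf (s + 1) (s' + 1)
  have hlen : |((e' : ℝ) - s') - (e - s)| ≤ |(s' : ℝ) - s| + |(e' : ℝ) - e| := by
    rw [hswap, add_comm |(s' : ℝ) - s|]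
    exact abs_sub _ _
  have hmean := segmentMean_mem_Icc hf h
  have key : segmentMean f s' e' - segmentMean f s e =
      ((∑ t ∈ Icc (s' + 1) e', f t - ∑ t ∈ Icc (s + 1) e, f t) -
        segmentMean f s e * (((e' : ℝ) - s') - (e - s))) / ((e' : ℝ) - s') := by
    have hm : (0 : ℝ) < e - s := sub_pos.2 (by exact_mod_cast h)
    simp only [segmentMean]
    field_simp
    ring
  rw [key, abs_div, abs_of_pos hm', div_le_div_iff_of_pos_right hm']
  calc _ ≤ |∑ t ∈ Icc (s' + 1) e', f t - ∑ t ∈ Icc (s + 1) e, f t| +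
        |segmentMean f s e| * |((e' : ℝ) - s') - (e - s)| := by
        rw [← abs_mul]; exact abs_sub _ _
    _ ≤ _ := by
      rw [abs_of_nonneg hmean.1]
      nlinarith [hmean.2, abs_nonneg ((e' : ℝ) - s' - (e - s))]

lemma abs_segmentMean_sub_le_four_mul (hf : ∀ t, f t ∈ Set.Icc 0 1) {s e s' e' : ℕ} (h : s < e)
    {δ : ℝ} (hδ : δ ≤ 1 / 2) (hΔ : |(s' : ℝ) - s| + |(e' : ℝ) - e| ≤ δ * ((e : ℝ) - s)) :
    |segmentMean f s' e' - segmentMean f s e| ≤ 4 * δ := by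
  have hm : (0 : ℝ) < e - s := sub_pos.2 (by exact_mod_cast h)
  have hlen : ((e : ℝ) - s) / 2 ≤ (e' : ℝ) - s' := by
    have := le_abs_self ((s' : ℝ) - s)
    have := neg_abs_le ((e' : ℝ) - e)
    have := mul_le_mul_of_nonneg_right hδ hm.le
    linarith
  have h' : s' < e' := by
    have : (s' : ℝ) < e' := by linarith
    exact_mod_cast this
  refine (abs_segmentMean_sub_le hf h h').trans ?_
  rw [div_le_iff₀ (by linarith)]
  nlinarith [abs_nonneg ((s' : ℝ) - s), abs_nonneg ((e' : ℝ) - e)]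

end SegmentMean

noncomputable def empiricalMeasure {ι α : Type*} [MeasurableSpace α] (X : ι → α) (I : Finset ι) :
    Measure α :=
  (#I : ℝ≥0∞)⁻¹ • ∑ i ∈ I, Measure.dirac (X i)

section EmpiricalMeasure

variable {ι α : Type*} [MeasurableSpace α] {X : ι → α} {I : Finset ι}

lemma empiricalMeasure_real_apply {S : Set α} (hS : MeasurableSet S) :
    (empiricalMeasure X I).real S = (#I : ℝ)⁻¹ * ∑ i ∈ I, S.indicator 1 (X i) := by
  have hdirac : ∀ i, Measure.dirac (X i) S = ENNReal.ofReal (S.indicator 1 (X i)) := fun i => by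
    rw [Measure.dirac_apply' _ hS]
    by_cases h : X i ∈ S <;> simp [h]
  simp only [empiricalMeasure, measureReal_def, Measure.smul_apply, Measure.coe_finsetSum,
    Finset.sum_apply, hdirac, smul_eq_mul, ENNReal.toReal_mul, ENNReal.toReal_inv,
    ENNReal.toReal_natCast]
  rw [ENNReal.toReal_sum fun _ _ => ENNReal.ofReal_ne_top]
  congr 1
  exact sum_congr rfl fun i _ =>
    ENNReal.toReal_ofReal (Set.indicator_nonneg (fun _ _ => zero_le_one) _)

lemma isProbabilityMeasure_empiricalMeasure (hI : I.Nonempty) :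
    IsProbabilityMeasure (empiricalMeasure X I) :=
  ⟨by simpa [empiricalMeasure] using ENNReal.inv_mul_cancel (by simpa using hI.ne_empty) (by simp)⟩

end EmpiricalMeasure

lemma segmentMean_ite_le_eq_empiricalMeasure_real_Iic (X : ℕ → ℝ) {s e : ℕ} (h : s ≤ e) (x : ℝ) :
    segmentMean (fun t => if X t ≤ x then 1 else 0) s e =
      (empiricalMeasure X (Icc (s + 1) e)).real (Set.Iic x) := by
  rw [empiricalMeasure_real_apply measurableSet_Iic, Nat.card_Icc, Nat.add_sub_add_right,
    Nat.cast_sub h]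
  simp only [segmentMean, Set.indicator_apply, Set.mem_Iic, Pi.one_apply]

lemma measureReal_Iio_eq_leftLim_cdf (ν : Measure ℝ) [IsProbabilityMeasure ν] (x : ℝ) :
    ν.real (Set.Iio x) = Function.leftLim (cdf ν) x := by
  conv_lhs => rw [← measure_cdf ν]
  rw [measureReal_def, (cdf ν).measure_Iio (tendsto_cdf_atBot ν), sub_zero,
    ENNReal.toReal_ofReal ((cdf_nonneg ν _).trans ((monotone_cdf ν).le_leftLim (sub_one_lt x)))]

lemma exists_quantile (ν : Measure ℝ) [IsProbabilityMeasure ν] {c : ℝ} (hc0 : 0 < c)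
    (hc1 : c < 1) : ∃ q, c ≤ ν.real (Set.Iic q) ∧ ν.real (Set.Iio q) ≤ c := by
  set S := {x | c ≤ cdf ν x}
  have hS : S.Nonempty := ((tendsto_cdf_atTop ν).eventually (eventually_gt_nhds hc1)).exists.imp
    fun _ hx => hx.le
  obtain ⟨x₀, hx₀⟩ := ((tendsto_cdf_atBot ν).eventually (eventually_lt_nhds hc0)).exists
  have hbdd : BddBelow S :=
    ⟨x₀, fun x hx => le_of_not_gt fun hlt => (hx.trans (monotone_cdf ν hlt.le)).not_gt hx₀⟩
  refine ⟨sInf S, ?_, ?_⟩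
  · rw [← cdf_eq_real]
    refine ge_of_tendsto ((cdf ν).right_continuous _ |>.mono Set.Ioi_subset_Ici_self)
      (eventually_nhdsWithin_of_forall fun y hy => ?_)
    obtain ⟨z, hz, hzy⟩ := exists_lt_of_csInf_lt hS hy
    exact hz.trans (monotone_cdf ν hzy.le)
  · rw [measureReal_Iio_eq_leftLim_cdf]
    exact le_of_tendsto ((monotone_cdf ν).tendsto_leftLim _) (eventually_nhdsWithin_of_forall
      fun y hy => le_of_not_gt fun h => (csInf_le hbdd h.le).not_gt hy)

-- `x ∈ [q j, q (j + 1))`, reading `q 0` as `-∞` and `q k` as `+∞`.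
lemma exists_grid_bracket (q : ℕ → ℝ) {k : ℕ} (hk : 0 < k) (x : ℝ) :
    ∃ j < k, (0 < j → q j ≤ x) ∧ (j + 1 < k → x < q (j + 1)) := by
  classical
  set P : ℕ → Prop := fun i => i = 0 ∨ q i ≤ x
  have hle := Nat.findGreatest_le (P := P) (k - 1)
  refine ⟨Nat.findGreatest P (k - 1), by omega, fun hj => ?_, fun hj => lt_of_not_ge fun hx => ?_⟩
  · exact (Nat.findGreatest_spec (P := P) (Nat.zero_le _) (Or.inl rfl)).resolve_left hj.ne'
  · exact Nat.findGreatest_is_greatest (P := P) (Nat.lt_succ_self _) (by omega) (Or.inr hx)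

lemma measureReal_Iic_mem_Icc_of_grid {ρ : Measure ℝ} [IsProbabilityMeasure ρ] {k j : ℕ}
    {q : ℕ → ℝ} {η x : ℝ} (hη : 0 ≤ η)
    (hIic : ∀ i ∈ Finset.Ioo 0 k, (i : ℝ) / k - η ≤ ρ.real (Set.Iic (q i)))
    (hIio : ∀ i ∈ Finset.Ioo 0 k, ρ.real (Set.Iio (q i)) ≤ (i : ℝ) / k + η)
    (hjk : j < k) (hlo : 0 < j → q j ≤ x) (hhi : j + 1 < k → x < q (j + 1)) :
    ρ.real (Set.Iic x) ∈ Set.Icc ((j : ℝ) / k - η) (((j : ℝ) + 1) / k + η) := by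
  constructor
  · rcases Nat.eq_zero_or_pos j with rfl | hj
    · simpa using (neg_nonpos.2 hη).trans measureReal_nonneg
    · exact (hIic j (mem_Ioo.2 ⟨hj, hjk⟩)).trans
        (measureReal_mono (Set.Iic_subset_Iic.2 (hlo hj)))
  · rcases (Nat.succ_le_of_lt hjk).lt_or_eq with hj | hj
    · have := hIio (j + 1) (mem_Ioo.2 ⟨j.succ_pos, hj⟩)
      push_cast at this
      exact (measureReal_mono (Set.Iic_subset_Iio.2 (hhi hj))).trans this
    · have hk : ((j : ℝ) + 1) / k = 1 := by
        rw [div_eq_one_iff_eq (Nat.cast_ne_zero.2 (by omega))]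
        exact_mod_cast hj
      rw [hk]
      linarith [measureReal_le_one (μ := ρ) (s := Set.Iic x)]

lemma exists_finset_abs_measureReal_Iic_sub_le (ν : Measure ℝ) [IsProbabilityMeasure ν] {k : ℕ}
    (hk : 0 < k) :
    ∃ T : Finset ℝ, ∀ (ρ : Measure ℝ) [IsProbabilityMeasure ρ] (η : ℝ), 0 ≤ η →
      (∀ t ∈ T, |ρ.real (Set.Iic t) - ν.real (Set.Iic t)| ≤ η ∧
        |ρ.real (Set.Iio t) - ν.real (Set.Iio t)| ≤ η) →
      ∀ x, |ρ.real (Set.Iic x) - ν.real (Set.Iic x)| ≤ 1 / k + η := by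
  have hquant : ∀ i ∈ Finset.Ioo 0 k,
      ∃ q, (i : ℝ) / k ≤ ν.real (Set.Iic q) ∧ ν.real (Set.Iio q) ≤ i / k := by
    intro i hi
    obtain ⟨hi0, hik⟩ := mem_Ioo.1 hi
    exact exists_quantile ν (by positivity) ((div_lt_one (by positivity)).2 (by exact_mod_cast hik))
  choose! q hq using hquant
  refine ⟨(Finset.Ioo 0 k).image q, fun ρ _ η hη hρ x => ?_⟩
  obtain ⟨j, hjk, hlo, hhi⟩ := exists_grid_bracket q hk x
  have hν := measureReal_Iic_mem_Icc_of_grid (ρ := ν) le_rfl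
    (fun i hi => by simpa using (hq i hi).1) (fun i hi => by simpa using (hq i hi).2) hjk hlo hhi
  have hρ := measureReal_Iic_mem_Icc_of_grid (ρ := ρ) hη
    (fun i hi => by
      have := abs_le.1 (hρ _ (mem_image_of_mem q hi)).1
      linarith [(hq i hi).1])
    (fun i hi => by
      have := abs_le.1 (hρ _ (mem_image_of_mem q hi)).2
      linarith [(hq i hi).2]) hjk hlo hhi
  rw [add_div, sub_zero, add_zero] at hν
  rw [add_div] at hρ
  rw [abs_le]
  constructor <;> linarith [hν.1, hν.2, hρ.1, hρ.2]

lemma tendsto_measure_exists_lt_abs_segmentMean_sub {Ω β : Type*} [MeasurableSpace Ω]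
    {μ : Measure Ω} {g : Ω → β → ℕ → ℝ} (hg : ∀ ω x t, g ω x t ∈ Set.Icc 0 1) {s e : ℕ → ℕ}
    (hse : ∀ n, s n < e n) {s' e' : ℕ → Ω → ℕ}
    (hoP : ∀ δ : ℝ, 0 < δ → Tendsto (fun n => μ {ω |
      δ * ((e n : ℝ) - s n) < |(s' n ω : ℝ) - s n| + |(e' n ω : ℝ) - e n|}) atTop (𝓝 0))
    {δ : ℝ} (hδ : 0 < δ) :
    Tendsto (fun n => μ {ω | ∃ x, δ <
      |segmentMean (g ω x) (s' n ω) (e' n ω) - segmentMean (g ω x) (s n) (e n)|}) atTop (𝓝 0) := by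
  refine tendsto_of_tendsto_of_tendsto_of_le_of_le tendsto_const_nhds
    (hoP (min (δ / 4) (1 / 2)) (by positivity)) (fun _ => zero_le)
    fun n => measure_mono fun ω ⟨x, hx⟩ => ?_
  by_contra hΔ
  have := abs_segmentMean_sub_le_four_mul (hg ω x) (hse n) (min_le_right _ _) (not_lt.1 hΔ)
  linarith [min_le_left (δ / 4) (1 / 2)]

lemma tendsto_measure_exists_lt_abs_sub_of_half {Ω β : Type*} [MeasurableSpace Ω] {μ : Measure Ω}
    {X Y Z : ℕ → Ω → β → ℝ} {δ : ℝ}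
    (hXY : Tendsto (fun n => μ {ω | ∃ x, δ / 2 < |X n ω x - Y n ω x|}) atTop (𝓝 0))
    (hYZ : Tendsto (fun n => μ {ω | ∃ x, δ / 2 < |Y n ω x - Z n ω x|}) atTop (𝓝 0)) :
    Tendsto (fun n => μ {ω | ∃ x, δ < |X n ω x - Z n ω x|}) atTop (𝓝 0) := by
  have hsum := hXY.add hYZ
  rw [add_zero] at hsum
  refine tendsto_of_tendsto_of_tendsto_of_le_of_le tendsto_const_nhds hsum (fun _ => zero_le)
    fun n => (measure_mono (t := {ω | ∃ x, δ / 2 < |X n ω x - Y n ω x|} ∪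
      {ω | ∃ x, δ / 2 < |Y n ω x - Z n ω x|}) ?_).trans (measure_union_le _ _)
  rintro ω ⟨x, hx⟩
  by_contra hω
  simp only [Set.mem_union, Set.mem_ofPred_eq, not_or, not_exists, not_lt] at hω
  linarith [abs_sub_le (X n ω x) (Y n ω x) (Z n ω x), hω.1 x, hω.2 x]

section Probability

variable {Ω : Type*} [MeasurableSpace Ω] {μ : Measure Ω} [IsProbabilityMeasure μ]

lemma measure_le_abs_sum_sub_sum_integral_le {ι : Type*} {X : ι → Ω → ℝ}
    (hX : ∀ i, Measurable (X i)) (hX01 : ∀ i ω, X i ω ∈ Set.Icc 0 1)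
    (hind : Pairwise fun i j => X i ⟂ᵢ[μ] X j) (I : Finset ι) {c : ℝ} (hc : 0 < c) :
    μ {ω | c ≤ |∑ i ∈ I, X i ω - ∑ i ∈ I, μ[X i]|} ≤ ENNReal.ofReal (#I / (4 * c ^ 2)) := by
  have hL2 : ∀ i, MemLp (X i) 2 μ := fun i =>
    memLp_of_bounded (ae_of_all _ (hX01 i)) (hX i).aestronglyMeasurable 2
  have hvar : variance (∑ i ∈ I, X i) μ ≤ #I / 4 := by
    rw [IndepFun.variance_sum (fun i _ => hL2 i) fun i _ j _ hij => hind hij]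
    calc ∑ i ∈ I, variance (X i) μ ≤ ∑ _i ∈ I, (1 / 4 : ℝ) :=
          sum_le_sum fun i _ => (variance_le_sq_of_bounded (ae_of_all _ (hX01 i))
            (hX i).aemeasurable).trans_eq (by norm_num)
      _ = #I / 4 := by simp [div_eq_mul_inv]
  have hmean : ∫ ω, ∑ i ∈ I, X i ω ∂μ = ∑ i ∈ I, μ[X i] :=
    integral_finsetSum I fun i _ => (hL2 i).integrable one_le_two
  calc μ {ω | c ≤ |∑ i ∈ I, X i ω - ∑ i ∈ I, μ[X i]|}
      = μ {ω | c ≤ |(∑ i ∈ I, X i) ω - μ[∑ i ∈ I, X i]|} := by simp only [Finset.sum_apply, hmean]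
    _ ≤ ENNReal.ofReal (variance (∑ i ∈ I, X i) μ / c ^ 2) :=
        meas_ge_le_variance_div_sq (memLp_finsetSum' I fun i _ => hL2 i) hc
    _ ≤ ENNReal.ofReal (#I / (4 * c ^ 2)) := by
        rw [← div_div]
        exact ENNReal.ofReal_le_ofReal (div_le_div_of_nonneg_right hvar (by positivity))

lemma measure_lt_abs_empiricalMeasure_real_sub_le {ι α : Type*} [MeasurableSpace α]
    {ε : ι → Ω → α} (hmeas : ∀ i, Measurable (ε i)) (hindep : iIndepFun ε μ) {ν : Measure α}
    (hlaw : ∀ i, μ.map (ε i) = ν) {S : Set α} (hS : MeasurableSet S) {I : Finset ι}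
    (hI : I.Nonempty) {η : ℝ} (hη : 0 < η) :
    μ {ω | η < |(empiricalMeasure (ε · ω) I).real S - ν.real S|} ≤
      ENNReal.ofReal (1 / (4 * #I * η ^ 2)) := by
  set X : ι → Ω → ℝ := fun i ω => S.indicator 1 (ε i ω)
  have hφ : Measurable (S.indicator (1 : α → ℝ)) := measurable_const.indicator hS
  have hX01 : ∀ i ω, X i ω ∈ Set.Icc 0 1 := fun i ω => by
    by_cases h : ε i ω ∈ S <;> simp [X, h]
  have hind : Pairwise fun i j => X i ⟂ᵢ[μ] X j := fun i j hij =>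
    (hindep.indepFun hij).comp hφ hφ
  have hmean : ∀ i, μ[X i] = ν.real S := fun i => by
    rw [← integral_map (hmeas i).aemeasurable hφ.aestronglyMeasurable, hlaw i,
      integral_indicator_one hS]
  have hcard : (0 : ℝ) < #I := by exact_mod_cast hI.card_pos
  calc μ {ω | η < |(empiricalMeasure (ε · ω) I).real S - ν.real S|}
      ≤ μ {ω | #I * η ≤ |∑ i ∈ I, X i ω - ∑ i ∈ I, μ[X i]|} := by
        refine measure_mono fun ω hω => ?_
        simp only [Set.mem_ofPred_eq, empiricalMeasure_real_apply hS, hmean, sum_const,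
          nsmul_eq_mul] at hω ⊢
        rw [← inv_mul_cancel_left₀ hcard.ne' (ν.real S), ← mul_sub, abs_mul,
          abs_of_pos (inv_pos.2 hcard), lt_inv_mul_iff₀ hcard] at hω
        exact hω.le
    _ ≤ ENNReal.ofReal (#I / (4 * (#I * η) ^ 2)) :=
        measure_le_abs_sum_sub_sum_integral_le (fun i => hφ.comp (hmeas i)) hX01 hind I
          (by positivity)
    _ = ENNReal.ofReal (1 / (4 * #I * η ^ 2)) := by
        congr 1
        field_simp

lemma tendsto_measure_lt_abs_empiricalMeasure_real_sub {ι α : Type*} [MeasurableSpace α]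
    {ε : ι → Ω → α} (hmeas : ∀ i, Measurable (ε i)) (hindep : iIndepFun ε μ) {ν : Measure α}
    (hlaw : ∀ i, μ.map (ε i) = ν) {I : ℕ → Finset ι} (hI : Tendsto (fun n => #(I n)) atTop atTop)
    {S : Set α} (hS : MeasurableSet S) {η : ℝ} (hη : 0 < η) :
    Tendsto (fun n => μ {ω | η < |(empiricalMeasure (ε · ω) (I n)).real S - ν.real S|}) atTop
      (𝓝 0) := by
  have hden : Tendsto (fun n => 4 * (#(I n) : ℝ) * η ^ 2) atTop atTop :=
    ((tendsto_natCast_atTop_atTop.comp hI).const_mul_atTop four_pos).atTop_mul_const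
      (by positivity)
  have hbound := ENNReal.tendsto_ofReal (tendsto_const_nhds (x := (1 : ℝ)).div_atTop hden)
  rw [ENNReal.ofReal_zero] at hbound
  refine tendsto_of_tendsto_of_tendsto_of_le_of_le' tendsto_const_nhds hbound
    (Eventually.of_forall fun _ => zero_le) ?_
  filter_upwards [hI.eventually_gt_atTop 0] with n hn
  exact measure_lt_abs_empiricalMeasure_real_sub_le hmeas hindep hlaw hS (card_pos.1 hn) hη

theorem tendsto_measure_exists_lt_abs_empiricalMeasure_Iic_sub {ι : Type*} {ε : ι → Ω → ℝ}
    (hmeas : ∀ i, Measurable (ε i)) (hindep : iIndepFun ε μ) {ν : Measure ℝ}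
    [IsProbabilityMeasure ν] (hlaw : ∀ i, μ.map (ε i) = ν) {I : ℕ → Finset ι}
    (hI : Tendsto (fun n => #(I n)) atTop atTop) {δ : ℝ} (hδ : 0 < δ) :
    Tendsto (fun n => μ {ω | ∃ x, δ < |(empiricalMeasure (ε · ω) (I n)).real (Set.Iic x) -
      ν.real (Set.Iic x)|}) atTop (𝓝 0) := by
  set η := δ / 2 with hηδ
  have hη : 0 < η := half_pos hδ
  obtain ⟨k, hk⟩ := exists_nat_one_div_lt hη
  obtain ⟨T, hT⟩ := exists_finset_abs_measureReal_Iic_sub_le ν k.succ_pos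
  set dev : Set ℝ → ℕ → Set Ω :=
    fun S n => {ω | η < |(empiricalMeasure (ε · ω) (I n)).real S - ν.real S|}
  have hne : ∀ᶠ n in atTop, (I n).Nonempty := (hI.eventually_gt_atTop 0).mono fun n => card_pos.1
  have hwlln : ∀ S, MeasurableSet S → Tendsto (fun n => μ (dev S n)) atTop (𝓝 0) := fun S hS =>
    tendsto_measure_lt_abs_empiricalMeasure_real_sub hmeas hindep hlaw hI hS hη
  have hsum := tendsto_finsetSum T fun t _ =>
    (hwlln (Set.Iic t) measurableSet_Iic).add (hwlln (Set.Iio t) measurableSet_Iio)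
  simp only [add_zero, sum_const_zero] at hsum
  refine tendsto_of_tendsto_of_tendsto_of_le_of_le' tendsto_const_nhds hsum
    (Eventually.of_forall fun _ => zero_le) ?_
  filter_upwards [hne] with n hn
  calc _ ≤ μ (⋃ t ∈ T, (dev (Set.Iic t) n ∪ dev (Set.Iio t) n)) := by
        refine measure_mono fun ω ⟨x, hx⟩ => ?_
        by_contra hω
        simp only [dev, Set.mem_iUnion, Set.mem_union, Set.mem_ofPred_eq, not_exists, not_or,
          not_lt] at hω
        have := isProbabilityMeasure_empiricalMeasure (X := (ε · ω)) hn
        have := hT _ η hη.le hω x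
        push_cast at hk this
        linarith [hηδ]
    _ ≤ ∑ t ∈ T, μ (dev (Set.Iic t) n ∪ dev (Set.Iio t) n) := measure_biUnion_finset_le T _
    _ ≤ _ := sum_le_sum fun t _ => measure_union_le _ _

end Probability

/-- stability of segment empirical distribution functions under `o_P`
perturbations of the segment endpoints, and the resulting uniform Glivenko–Cantelli
consistency: `sup_x |F̂_{â,b̂}(x) − F̂_{a,b}(x)| = o_P(1)` and
`sup_x |F̂_{â,b̂}(x) − F(x)| = o_P(1)`. -/
theorem empirical_df_endpoint_stability
    {Ω : Type*} [MeasurableSpace Ω] (μ : Measure Ω) [IsProbabilityMeasure μ]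
    (ε : ℕ → Ω → ℝ)
    (hmeas : ∀ t, Measurable (ε t))
    (hindep : iIndepFun ε μ)
    (hident : ∀ t, IdentDistrib (ε t) (ε 0) μ μ)
    (F : ℝ → ℝ) (hF : ∀ x, F x = (μ {ω | ε 0 ω ≤ x}).toReal)
    (a b : ℕ → ℕ) (hab : ∀ n, a n < b n)
    (hlen : Filter.Tendsto (fun n => (b n : ℝ) - a n) Filter.atTop Filter.atTop)
    (ahat bhat : ℕ → Ω → ℕ)
    (Fhat : ℕ → ℕ → ℝ → Ω → ℝ)
    (hFhat : ∀ s e x ω, Fhat s e x ω =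
      ((e : ℝ) - s)⁻¹ * ∑ t ∈ Finset.Icc (s + 1) e, (if ε t ω ≤ x then (1 : ℝ) else 0))
    (hoP : ∀ δ : ℝ, 0 < δ →
      Filter.Tendsto (fun n => μ {ω |
          |(ahat n ω : ℝ) - a n| + |(bhat n ω : ℝ) - b n| > δ * ((b n : ℝ) - a n)})
        Filter.atTop (nhds 0)) :
    (∀ δ : ℝ, 0 < δ →
      Filter.Tendsto (fun n => μ {ω | ∃ x : ℝ,
          |Fhat (ahat n ω) (bhat n ω) x ω - Fhat (a n) (b n) x ω| > δ})
        Filter.atTop (nhds 0)) ∧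
    (∀ δ : ℝ, 0 < δ →
      Filter.Tendsto (fun n => μ {ω | ∃ x : ℝ,
          |Fhat (ahat n ω) (bhat n ω) x ω - F x| > δ})
        Filter.atTop (nhds 0)) := by
  have hFhat' : ∀ s e x ω, Fhat s e x ω = segmentMean (fun t => if ε t ω ≤ x then 1 else 0) s e :=
    hFhat
  have hstab : ∀ δ : ℝ, 0 < δ → Tendsto (fun n => μ {ω | ∃ x : ℝ,
      |Fhat (ahat n ω) (bhat n ω) x ω - Fhat (a n) (b n) x ω| > δ}) atTop (𝓝 0) := by
    intro δ hδ
    simpa only [hFhat', gt_iff_lt] using tendsto_measure_exists_lt_abs_segmentMean_sub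
      (g := fun ω x t => if ε t ω ≤ x then 1 else 0) (fun _ _ _ => by split_ifs <;> simp) hab
      hoP hδ
  have hGC : ∀ δ : ℝ, 0 < δ → Tendsto (fun n => μ {ω | ∃ x : ℝ,
      |Fhat (a n) (b n) x ω - F x| > δ}) atTop (𝓝 0) := by
    intro δ hδ
    have := Measure.isProbabilityMeasure_map (μ := μ) (hmeas 0).aemeasurable
    have hcard : Tendsto (fun n => #(Icc (a n + 1) (b n))) atTop atTop := by
      refine tendsto_natCast_atTop_iff.1 (hlen.congr fun n => ?_)
      rw [Nat.card_Icc, Nat.add_sub_add_right, Nat.cast_sub (hab n).le]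
    refine (tendsto_measure_exists_lt_abs_empiricalMeasure_Iic_sub hmeas hindep
      (fun t => (hident t).map_eq) hcard hδ).congr fun n => ?_
    simp only [hFhat', segmentMean_ite_le_eq_empiricalMeasure_real_Iic _ (hab n).le, hF,
      map_measureReal_apply (hmeas 0) measurableSet_Iic]
    rfl
  exact ⟨hstab, fun δ hδ => tendsto_measure_exists_lt_abs_sub_of_half
    (hstab _ (half_pos hδ)) (hGC _ (half_pos hδ))⟩
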